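/- In a finite POMDP, the t-step optimal value function V_t* over beliefs is piecewise linear and convex: there exists a finite set Γ_t of vectors α : S → ℝ such that V_t*(b) = max_{α∈Γ_t} Σ_{s∈S} α(s) b(s) for all beliefs b. -/

import Mathlib

/-!
Induction on the horizon. If `V_t(b) = max_{α ∈ Γ_t} ⟨α, b⟩` on beliefs, then for every
observation `z` the factor `Pr(z | b, a)` in front of `V_t(b^{a,z})` cancels the normalisation
of the Bayesian update, so `Pr(z | b, a) V_t(b^{a,z}) = max_{α ∈ Γ_t} ⟨α, c_z⟩` where
`c_z(s') = O(z | a, s') Σ_s P(s' | s, a) b(s)` is linear in `b` (both sides vanish when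
`Pr(z | b, a) = 0`). A sum over `z` of maxima is the maximum over choices `σ : Z → Γ_t`, and the
maximum over actions of these maxima is a maximum over pairs `(a, σ)`, each of which contributes
one α-vector linear in `b`.
-/

open Finset

theorem Finset.sum_sup'_eq_sup'_piFinset {ι α M : Type*} [Fintype ι] [DecidableEq ι]
    [AddCommMonoid M] [LinearOrder M] [IsOrderedAddMonoid M]
    (t : ι → Finset α) (ht : ∀ i, (t i).Nonempty) (f : ι → α → M) :
    ∑ i, (t i).sup' (ht i) (f i) =
      (Fintype.piFinset t).sup' (Fintype.piFinset_nonempty.mpr ht)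
        fun σ => ∑ i, f i (σ i) := by
  apply le_antisymm
  · choose σ hσ hσf using fun i => exists_mem_eq_sup' (ht i) (f i)
    calc ∑ i, (t i).sup' (ht i) (f i) = ∑ i, f i (σ i) := sum_congr rfl fun i _ => hσf i
      _ ≤ _ := le_sup' (fun σ => ∑ i, f i (σ i)) (Fintype.mem_piFinset.mpr hσ)
  · exact sup'_le _ _ fun σ hσ =>
      sum_le_sum fun i _ => le_sup' (f i) (Fintype.mem_piFinset.mp hσ i)

namespace POMDP

variable {S A Z : Type*} [Fintype S]

def IsAlphaVectorRep (V : (S → ℝ) → ℝ) (Γ : Finset (S → ℝ)) : Prop :=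
  ∃ hΓ : Γ.Nonempty, ∀ b : S → ℝ, (∀ s, 0 ≤ b s) → (∑ s, b s) = 1 →
    V b = Γ.sup' hΓ (fun α => ∑ s, α s * b s)

theorem IsAlphaVectorRep.sum_mul_apply_div_sum {V : (S → ℝ) → ℝ} {Γ : Finset (S → ℝ)}
    (h : IsAlphaVectorRep V Γ) {w : S → ℝ} (hw : ∀ s, 0 ≤ w s) :
    (∑ s, w s) * V (fun s => w s / ∑ s', w s') = Γ.sup' h.fst (fun α => ∑ s, α s * w s) := by
  obtain ⟨hΓ, hV⟩ := h
  rcases (sum_nonneg fun s (_ : s ∈ univ) => hw s).eq_or_lt with hzero | hpos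
  · have hw0 : ∀ s, w s = 0 := fun s =>
      (sum_eq_zero_iff_of_nonneg fun s _ => hw s).mp hzero.symm s (mem_univ s)
    simp [hw0]
  · have hbelief : ∑ s, w s / ∑ s', w s' = 1 := by
      rw [← sum_div, div_self hpos.ne']
    rw [hV _ (fun s => div_nonneg (hw s) hpos.le) hbelief, mul₀_sup' hpos.le]
    refine sup'_congr hΓ rfl fun α _ => ?_
    rw [mul_sum]
    refine sum_congr rfl fun s _ => ?_
    field_simp

variable (P : S → A → S → ℝ) (R : S → A → ℝ) (O : A → S → Z → ℝ) (γ : ℝ)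

/-- `jointNext P O b a z s' = Pr(s', z | b, a)`, the unnormalised Bayesian update. -/
def jointNext (b : S → ℝ) (a : A) (z : Z) (s' : S) : ℝ :=
  O a s' z * ∑ s, P s a s' * b s

variable {P O} in
theorem nonneg_jointNext (hP0 : ∀ s a s', 0 ≤ P s a s') (hO0 : ∀ a s' z, 0 ≤ O a s' z)
    {b : S → ℝ} (hb : ∀ s, 0 ≤ b s) (a : A) (z : Z) (s' : S) : 0 ≤ jointNext P O b a z s' :=
  mul_nonneg (hO0 a s' z) (sum_nonneg fun s _ => mul_nonneg (hP0 s a s') (hb s))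

variable [Fintype Z]

noncomputable def qValue (V : (S → ℝ) → ℝ) (b : S → ℝ) (a : A) : ℝ :=
  (∑ s, b s * R s a) + γ * ∑ z, (∑ s', jointNext P O b a z s') *
    V (fun s' => jointNext P O b a z s' / ∑ s'', jointNext P O b a z s'')

def backupVector (a : A) (σ : Z → S → ℝ) : S → ℝ :=
  fun s => R s a + γ * ∑ z, ∑ s', P s a s' * O a s' z * σ z s'

theorem sum_backupVector_mul (a : A) (σ : Z → S → ℝ) (b : S → ℝ) :
    ∑ s, backupVector P R O γ a σ s * b s =
      (∑ s, b s * R s a) + γ * ∑ z, ∑ s', σ z s' * jointNext P O b a z s' := by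
  simp only [backupVector, jointNext, add_mul, sum_add_distrib, mul_sum, sum_mul]
  congr 1
  · exact sum_congr rfl fun s _ => mul_comm _ _
  · rw [sum_comm]
    refine sum_congr rfl fun z _ => ?_
    rw [sum_comm]
    exact sum_congr rfl fun s' _ => sum_congr rfl fun s _ => by ring

open Classical in
noncomputable def backupSet [Fintype A] (Γ : Finset (S → ℝ)) : Finset (S → ℝ) :=
  (univ ×ˢ Fintype.piFinset fun _ : Z => Γ).image fun p => backupVector P R O γ p.1 p.2

variable {P O γ}

theorem IsAlphaVectorRep.qValue_eq_sup'_backupVector [DecidableEq Z] {V : (S → ℝ) → ℝ}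
    {Γ : Finset (S → ℝ)} (h : IsAlphaVectorRep V Γ) (hγ : 0 ≤ γ)
    (hP0 : ∀ s a s', 0 ≤ P s a s') (hO0 : ∀ a s' z, 0 ≤ O a s' z)
    {b : S → ℝ} (hb : ∀ s, 0 ≤ b s) (a : A) :
    qValue P R O γ V b a =
      (Fintype.piFinset fun _ : Z => Γ).sup' (Fintype.piFinset_nonempty.mpr fun _ => h.fst)
        fun σ => ∑ s, backupVector P R O γ a σ s * b s := by
  simp only [qValue, sum_backupVector_mul]
  rw [sum_congr rfl fun z _ => h.sum_mul_apply_div_sum (nonneg_jointNext hP0 hO0 hb a z),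
    sum_sup'_eq_sup'_piFinset, mul₀_sup' hγ, add_sup']

theorem IsAlphaVectorRep.backupSet_of_bellman [Fintype A] [Nonempty A] {V V' : (S → ℝ) → ℝ}
    {Γ : Finset (S → ℝ)} (h : IsAlphaVectorRep V Γ) (hγ : 0 ≤ γ)
    (hP0 : ∀ s a s', 0 ≤ P s a s') (hO0 : ∀ a s' z, 0 ≤ O a s' z)
    (hV' : ∀ b : S → ℝ, (∀ s, 0 ≤ b s) → (∑ s, b s) = 1 →
      V' b = univ.sup' univ_nonempty (qValue P R O γ V b)) :
    IsAlphaVectorRep V' (backupSet P R O γ Γ) := by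
  classical
  refine ⟨(univ_nonempty.product (Fintype.piFinset_nonempty.mpr fun _ => h.fst)).image _,
    fun b hb hb1 => ?_⟩
  unfold backupSet
  rw [hV' b hb hb1, sup'_image, sup'_product_left]
  exact sup'_congr _ rfl fun a _ => h.qValue_eq_sup'_backupVector R hγ hP0 hO0 hb a

theorem isAlphaVectorRep_image_reward [Fintype A] [Nonempty A] {V : (S → ℝ) → ℝ}
    (hV : ∀ b : S → ℝ, (∀ s, 0 ≤ b s) → (∑ s, b s) = 1 →
      V b = univ.sup' univ_nonempty (fun a => ∑ s, b s * R s a)) :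
    IsAlphaVectorRep V (univ.image fun a s => R s a) := by
  classical
  refine ⟨univ_nonempty.image _, fun b hb hb1 => ?_⟩
  rw [hV b hb hb1, sup'_image]
  exact sup'_congr _ rfl fun a _ => sum_congr rfl fun s _ => mul_comm _ _

end POMDP

open POMDP in
theorem finite_horizon_value_is_PWLC_general
    {S A Z : Type} [Fintype S] [Fintype A] [Fintype Z] [Nonempty A]
    (P : S → A → S → ℝ) (R : S → A → ℝ) (O : A → S → Z → ℝ) (γ : ℝ)
    (hγ0 : 0 ≤ γ)
    (hP0 : ∀ s a s', 0 ≤ P s a s')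
    (hO0 : ∀ a s' z, 0 ≤ O a s' z)
    -- the finite-horizon optimal belief value functions, defined by the Bellman recursion
    (V : ℕ → (S → ℝ) → ℝ)
    (hV0 : ∀ b : S → ℝ, (∀ s, 0 ≤ b s) → (∑ s, b s) = 1 →
      V 0 b = univ.sup' univ_nonempty (fun a => ∑ s, b s * R s a))
    (hVrec : ∀ t : ℕ, ∀ b : S → ℝ, (∀ s, 0 ≤ b s) → (∑ s, b s) = 1 →
      V (t + 1) b = univ.sup' univ_nonempty (fun a =>
        (∑ s, b s * R s a) +
        γ * ∑ z, (∑ s', O a s' z * ∑ s, P s a s' * b s) *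
          V t (fun s' => (O a s' z * ∑ s, P s a s' * b s) /
            (∑ s'', O a s'' z * ∑ s, P s a s'' * b s)))) :
    ∀ t : ℕ, ∃ Γ : Finset (S → ℝ), ∃ hΓ : Γ.Nonempty,
      ∀ b : S → ℝ, (∀ s, 0 ≤ b s) → (∑ s, b s) = 1 →
        V t b = Γ.sup' hΓ (fun α => ∑ s, α s * b s) := by
  intro t
  induction t with
  | zero => exact ⟨_, isAlphaVectorRep_image_reward R hV0⟩
  | succ t ih =>
    obtain ⟨Γ, hΓ⟩ : ∃ Γ, IsAlphaVectorRep (V t) Γ := ih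
    exact ⟨_, hΓ.backupSet_of_bellman R hγ0 hP0 hO0 (hVrec t)⟩

/-- In a finite POMDP, the `t`-step optimal belief value function `V_t*`
is piecewise linear and convex: it admits a finite α-vector representation
`V_t*(b) = max_{α ∈ Γ_t} Σ_s α(s) b(s)` for all beliefs `b`. -/
theorem finite_horizon_value_is_PWLC
    {S A Z : Type} [Fintype S] [Fintype A] [Fintype Z] [Nonempty A]
    (P : S → A → S → ℝ) (R : S → A → ℝ) (O : A → S → Z → ℝ) (γ : ℝ)
    (hγ0 : 0 ≤ γ)
    (hP0 : ∀ s a s', 0 ≤ P s a s') (hP1 : ∀ s a, ∑ s', P s a s' = 1)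
    (hO0 : ∀ a s' z, 0 ≤ O a s' z) (hO1 : ∀ a s', ∑ z, O a s' z = 1)
    -- the finite-horizon optimal belief value functions, defined by the Bellman recursion
    (V : ℕ → (S → ℝ) → ℝ)
    (hV0 : ∀ b : S → ℝ, (∀ s, 0 ≤ b s) → (∑ s, b s) = 1 →
      V 0 b = univ.sup' univ_nonempty (fun a => ∑ s, b s * R s a))
    (hVrec : ∀ t : ℕ, ∀ b : S → ℝ, (∀ s, 0 ≤ b s) → (∑ s, b s) = 1 →
      V (t + 1) b = univ.sup' univ_nonempty (fun a =>
        (∑ s, b s * R s a) +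
        γ * ∑ z, (∑ s', O a s' z * ∑ s, P s a s' * b s) *
          V t (fun s' => (O a s' z * ∑ s, P s a s' * b s) /
            (∑ s'', O a s'' z * ∑ s, P s a s'' * b s)))) :
    ∀ t : ℕ, ∃ Γ : Finset (S → ℝ), ∃ hΓ : Γ.Nonempty,
      ∀ b : S → ℝ, (∀ s, 0 ≤ b s) → (∑ s, b s) = 1 →
        V t b = Γ.sup' hΓ (fun α => ∑ s, α s * b s) :=
  finite_horizon_value_is_PWLC_general P R O γ hγ0 hP0 hO0 V hV0 hVrec
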